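/- Let M^λ be the compiled model built from a robot model M^R and a human model M^H sharing fluent set F: valid plans of M^λ consist of a block of human-copy actions (valid with respect to M^H on the human fluent copies, starting from the copy of I^H and ending in a state satisfying the copied goal), followed by the human flip action, a block of robot actions (valid with respect to M^R, starting from I^R and ending in a state satisfying G^R), the robot flip action, and then check actions. Then for every valid plan π^λ of M^λ, the subsequence H(π^λ) of human-copy actions is a valid plan of M^H, and the subsequence R(π^λ) of robot actions is a valid plan of M^R. -/
import Mathlib


/-- A STRIPS-style action over fluent type `F`: positive/negative preconditions
and add/delete effects. -/
structure Act (F : Type) where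
  prePos : Finset F
  preNeg : Finset F
  addE : Finset F
  delE : Finset F
deriving DecidableEq

/-- A planning model `M = ⟨F, A, c, I, G⟩`. -/
structure PModel (F : Type) [DecidableEq F] where
  fluents : Finset F
  actions : Finset (Act F)
  cost : Act F → ℕ
  init : Finset F
  goal : Finset F

variable {F : Type} [DecidableEq F]

/-- Action `a` is executable in state `s`. -/
def execAct (s : Finset F) (a : Act F) : Prop :=
  a.prePos ⊆ s ∧ a.preNeg ∩ s = ∅

/-- Transition of one action. -/
def stepAct (s : Finset F) (a : Act F) : Finset F :=
  (s ∪ a.addE) \ a.delE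

/-- Transition extended to action sequences. -/
def runSeq (s : Finset F) : List (Act F) → Finset F
  | [] => s
  | a :: π => runSeq (stepAct s a) π

/-- The action sequence is executable in order from state `s`, using actions of `M`. -/
def ExecFrom (M : PModel F) : Finset F → List (Act F) → Prop
  | _, [] => True
  | s, a :: π => a ∈ M.actions ∧ execAct s a ∧ ExecFrom M (stepAct s a) π

/-- A plan for `M`: executable from the initial state and achieving the goal. -/
def IsPlan (M : PModel F) (π : List (Act F)) : Prop :=
  ExecFrom M M.init π ∧ M.goal ⊆ runSeq M.init π

/-- Cost of a plan. -/
def planCost (M : PModel F) (π : List (Act F)) : ℕ :=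
  (π.map M.cost).sum

/-- Cost-optimal plan. -/
def IsOptimal (M : PModel F) (π : List (Act F)) : Prop :=
  IsPlan M π ∧ ∀ π', IsPlan M π' → planCost M π ≤ planCost M π'

/-- Goal state divergence of plans `π1` of `M1` and `π2` of `M2`:
the symmetric difference of the two final states. -/
def GSD (M1 M2 : PModel F) (π1 π2 : List (Act F)) : Finset F :=
  (runSeq M1.init π1 \ runSeq M2.init π2) ∪ (runSeq M2.init π2 \ runSeq M1.init π1)

/-- All achievable values `|GSD(π1, M1, π2, M2)|` over pairs of valid plans. -/
def gsdVals (M1 M2 : PModel F) : Set ℕ :=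
  { n | ∃ π1 π2, IsPlan M1 π1 ∧ IsPlan M2 π2 ∧ n = (GSD M1 M2 π1 π2).card }

/-- Maximal (worst-case) goal state divergence `GD↑(M1, M2)`. -/
noncomputable def GDup (M1 M2 : PModel F) : ℕ := sSup (gsdVals M1 M2)

/-- Minimal (best-case) goal state divergence `GD↓(M1, M2)`. -/
noncomputable def GDdown (M1 M2 : PModel F) : ℕ := sInf (gsdVals M1 M2)

/-- Fluents of the compiled model `M^λ`: the robot copy `F^R`, the disjoint human copy
`F^H`, the housekeeping fluents `robot_can_act`/`human_can_act`, and one compare fluent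
`f^κ` per original fluent. -/
inductive LF (F : Type) where
  | robot : F → LF F
  | human : F → LF F
  | robotCanAct : LF F
  | humanCanAct : LF F
  | compare : F → LF F
deriving DecidableEq

variable {F : Type} [DecidableEq F] in
/-- A robot action of `M^R` lifted into the compiled model: expressed in the robot copy of
the fluents, with `robot_can_act` added as a positive precondition. -/
def liftR (a : Act F) : Act (LF F) where
  prePos := a.prePos.image LF.robot ∪ {LF.robotCanAct}
  preNeg := a.preNeg.image LF.robot
  addE := a.addE.image LF.robot
  delE := a.delE.image LF.robot

variable {F : Type} [DecidableEq F] in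
/-- A human action of `M^H` lifted into the compiled model: expressed in the human copy of
the fluents, with `human_can_act` added as a positive precondition. -/
def liftH (a : Act F) : Act (LF F) where
  prePos := a.prePos.image LF.human ∪ {LF.humanCanAct}
  preNeg := a.preNeg.image LF.human
  addE := a.addE.image LF.human
  delE := a.delE.image LF.human

variable {F : Type} [DecidableEq F] in
/-- The human flip action: requires the human copy of the goal and `human_can_act`;
deletes `human_can_act` and adds `robot_can_act`. -/
def flipH (MH : PModel F) : Act (LF F) where
  prePos := MH.goal.image LF.human ∪ {LF.humanCanAct}
  preNeg := ∅
  addE := {LF.robotCanAct}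
  delE := {LF.humanCanAct}

variable {F : Type} [DecidableEq F] in
/-- The robot flip action: requires the robot goal and `robot_can_act`;
deletes `robot_can_act`. -/
def flipR (MR : PModel F) : Act (LF F) where
  prePos := MR.goal.image LF.robot ∪ {LF.robotCanAct}
  preNeg := ∅
  addE := ∅
  delE := {LF.robotCanAct}

variable {F : Type} [DecidableEq F] in
/-- Check disagreement action `a^1_{f}`: fires when `f` holds for the robot but not in the
human copy; adds the compare fluent `f^κ`. -/
def chk1 (f : F) : Act (LF F) where
  prePos := {LF.robot f}
  preNeg := {LF.human f, LF.robotCanAct, LF.humanCanAct, LF.compare f}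
  addE := {LF.compare f}
  delE := ∅

variable {F : Type} [DecidableEq F] in
/-- Check disagreement action `a^2_{f}`: fires when `f` holds in the human copy but not
for the robot; adds the compare fluent `f^κ`. -/
def chk2 (f : F) : Act (LF F) where
  prePos := {LF.human f}
  preNeg := {LF.robot f, LF.robotCanAct, LF.humanCanAct, LF.compare f}
  addE := {LF.compare f}
  delE := ∅

variable {F : Type} [DecidableEq F] in
/-- Check agreement action `a^3_{f}`: fires when `f` holds in both copies; adds `f^κ`. -/
def chk3 (f : F) : Act (LF F) where
  prePos := {LF.robot f, LF.human f}
  preNeg := {LF.robotCanAct, LF.humanCanAct, LF.compare f}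
  addE := {LF.compare f}
  delE := ∅

variable {F : Type} [DecidableEq F] in
/-- Check agreement action `a^4_{f}`: fires when `f` holds in neither copy; adds `f^κ`. -/
def chk4 (f : F) : Act (LF F) where
  prePos := ∅
  preNeg := {LF.robot f, LF.human f, LF.robotCanAct, LF.humanCanAct, LF.compare f}
  addE := {LF.compare f}
  delE := ∅

variable {F : Type} [DecidableEq F] in
/-- The compiled model `M^λ` for the pair `⟨M^R, M^H⟩` (sharing fluent set `F = F^R`),
with cost function `c`: lifted robot and human actions, the two flip actions, and the four
check actions per fluent; initial state `I^R ∪ I^H ∪ {human_can_act}`; goal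
`G^R ∪ G^H ∪ F^κ`. -/
def compiled (MR MH : PModel F) (c : Act (LF F) → ℕ) : PModel (LF F) where
  fluents := MR.fluents.image LF.robot ∪ MR.fluents.image LF.human ∪
    {LF.robotCanAct, LF.humanCanAct} ∪ MR.fluents.image LF.compare
  actions := MR.actions.image liftR ∪ MH.actions.image liftH ∪
    {flipH MH, flipR MR} ∪ MR.fluents.image chk1 ∪ MR.fluents.image chk2 ∪
    MR.fluents.image chk3 ∪ MR.fluents.image chk4
  cost := c
  init := MR.init.image LF.robot ∪ MH.init.image LF.human ∪ {LF.humanCanAct}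
  goal := MR.goal.image LF.robot ∪ MH.goal.image LF.human ∪ MR.fluents.image LF.compare

variable {F : Type} [DecidableEq F] in
/-- `H(π^λ)`: the subsequence of human-copy actions appearing in `π^λ`. -/
def humanPart (MH : PModel F) (π : List (Act (LF F))) : List (Act (LF F)) :=
  π.filter (fun a => decide (a ∈ MH.actions.image liftH))

variable {F : Type} [DecidableEq F] in
/-- `R(π^λ)`: the subsequence of robot actions appearing in `π^λ`. -/
def robotPart (MR : PModel F) (π : List (Act (LF F))) : List (Act (LF F)) :=
  π.filter (fun a => decide (a ∈ MR.actions.image liftR))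

variable {F : Type} [DecidableEq F] in
/-- `|κ⁻(π^λ)|`: the number of check disagreement actions occurring in `π^λ`. -/
def disCount (MR : PModel F) (π : List (Act (LF F))) : ℕ :=
  π.countP (fun a => decide (∃ f ∈ MR.fluents, a = chk1 f ∨ a = chk2 f))

variable {F : Type} [DecidableEq F] in
/-- `|κ⁺(π^λ)|`: the number of check agreement actions occurring in `π^λ`. -/
def agrCount (MR : PModel F) (π : List (Act (LF F))) : ℕ :=
  π.countP (fun a => decide (∃ f ∈ MR.fluents, a = chk3 f ∨ a = chk4 f))

variable {F : Type} [DecidableEq F] in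
/-- A well-formed planning model: initial state, goal, and all action components are
contained in the fluent set. -/
def WellFormed (M : PModel F) : Prop :=
  M.init ⊆ M.fluents ∧ M.goal ⊆ M.fluents ∧
  ∀ a ∈ M.actions,
    a.prePos ⊆ M.fluents ∧ a.preNeg ⊆ M.fluents ∧
    a.addE ⊆ M.fluents ∧ a.delE ⊆ M.fluents


section Aux
variable {F : Type} [DecidableEq F]

/-- Projection to the human copy of the fluents. -/
def projHu (s : Finset (LF F)) : Finset F :=
  s.biUnion fun x => match x with | LF.human f => {f} | _ => ∅

/-- Projection to the robot copy of the fluents. -/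
def projRo (s : Finset (LF F)) : Finset F :=
  s.biUnion fun x => match x with | LF.robot f => {f} | _ => ∅

lemma mem_projHu {s : Finset (LF F)} {f : F} : f ∈ projHu s ↔ LF.human f ∈ s := by
  constructor
  · intro h
    obtain ⟨x, hx, hf⟩ := Finset.mem_biUnion.mp h
    cases x <;> simp_all
  · intro h
    exact Finset.mem_biUnion.mpr ⟨LF.human f, h, by simp⟩

lemma mem_projRo {s : Finset (LF F)} {f : F} : f ∈ projRo s ↔ LF.robot f ∈ s := by
  constructor
  · intro h
    obtain ⟨x, hx, hf⟩ := Finset.mem_biUnion.mp h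
    cases x <;> simp_all
  · intro h
    exact Finset.mem_biUnion.mpr ⟨LF.robot f, h, by simp⟩

lemma projHu_step_liftH (s : Finset (LF F)) (b : Act F) :
    projHu (stepAct s (liftH b)) = stepAct (projHu s) b := by
  ext f
  simp [mem_projHu, stepAct, liftH, Finset.mem_sdiff, Finset.mem_union, mem_projHu]

lemma projRo_step_liftR (s : Finset (LF F)) (b : Act F) :
    projRo (stepAct s (liftR b)) = stepAct (projRo s) b := by
  ext f
  simp [mem_projRo, stepAct, liftR, Finset.mem_sdiff, Finset.mem_union, mem_projRo]

lemma projHu_step_other (s : Finset (LF F)) (a : Act (LF F))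
    (ha : ∀ f : F, LF.human f ∉ a.addE) (hd : ∀ f : F, LF.human f ∉ a.delE) :
    projHu (stepAct s a) = projHu s := by
  ext f
  simp only [mem_projHu, stepAct, Finset.mem_sdiff, Finset.mem_union]
  exact ⟨fun h => h.1.resolve_right (ha f), fun h => ⟨Or.inl h, hd f⟩⟩

lemma projRo_step_other (s : Finset (LF F)) (a : Act (LF F))
    (ha : ∀ f : F, LF.robot f ∉ a.addE) (hd : ∀ f : F, LF.robot f ∉ a.delE) :
    projRo (stepAct s a) = projRo s := by
  ext f
  simp only [mem_projRo, stepAct, Finset.mem_sdiff, Finset.mem_union]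
  exact ⟨fun h => h.1.resolve_right (ha f), fun h => ⟨Or.inl h, hd f⟩⟩

lemma execAct_projHu {s : Finset (LF F)} {b : Act F} (h : execAct s (liftH b)) :
    execAct (projHu s) b := by
  obtain ⟨h1, h2⟩ := h
  constructor
  · intro f hf
    exact mem_projHu.mpr (h1 (Finset.mem_union_left _ (Finset.mem_image_of_mem LF.human hf)))
  · apply Finset.eq_empty_iff_forall_notMem.mpr
    intro f hf
    simp only [Finset.mem_inter, mem_projHu] at hf
    have : LF.human f ∈ (liftH b).preNeg ∩ s :=
      Finset.mem_inter.mpr ⟨Finset.mem_image_of_mem LF.human hf.1, hf.2⟩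
    rw [h2] at this
    exact absurd this (Finset.notMem_empty _)

lemma execAct_projRo {s : Finset (LF F)} {b : Act F} (h : execAct s (liftR b)) :
    execAct (projRo s) b := by
  obtain ⟨h1, h2⟩ := h
  constructor
  · intro f hf
    exact mem_projRo.mpr (h1 (Finset.mem_union_left _ (Finset.mem_image_of_mem LF.robot hf)))
  · apply Finset.eq_empty_iff_forall_notMem.mpr
    intro f hf
    simp only [Finset.mem_inter, mem_projRo] at hf
    have : LF.robot f ∈ (liftR b).preNeg ∩ s :=
      Finset.mem_inter.mpr ⟨Finset.mem_image_of_mem LF.robot hf.1, hf.2⟩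
    rw [h2] at this
    exact absurd this (Finset.notMem_empty _)

lemma classifyHu {MR MH : PModel F} {c : Act (LF F) → ℕ} {a : Act (LF F)}
    (hmem : a ∈ (compiled MR MH c).actions) (hnot : a ∉ MH.actions.image liftH) :
    (∀ f : F, LF.human f ∉ a.addE) ∧ (∀ f : F, LF.human f ∉ a.delE) := by
  simp only [compiled, Finset.mem_union, Finset.mem_image, Finset.mem_insert,
    Finset.mem_singleton] at hmem
  rcases hmem with ((((((⟨b, hb, rfl⟩ | h2) | (h3 | h4)) | ⟨f, hf, rfl⟩) | ⟨f, hf, rfl⟩) |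
      ⟨f, hf, rfl⟩) | ⟨f, hf, rfl⟩)
  · constructor <;> intro f <;> simp [liftR]
  · exact absurd (Finset.mem_image.mpr h2) hnot
  · subst h3; constructor <;> intro f <;> simp [flipH]
  · subst h4; constructor <;> intro f <;> simp [flipR]
  all_goals constructor <;> intro g <;> simp [chk1, chk2, chk3, chk4]

lemma classifyRo {MR MH : PModel F} {c : Act (LF F) → ℕ} {a : Act (LF F)}
    (hmem : a ∈ (compiled MR MH c).actions) (hnot : a ∉ MR.actions.image liftR) :
    (∀ f : F, LF.robot f ∉ a.addE) ∧ (∀ f : F, LF.robot f ∉ a.delE) := by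
  simp only [compiled, Finset.mem_union, Finset.mem_image, Finset.mem_insert,
    Finset.mem_singleton] at hmem
  rcases hmem with ((((((h1 | ⟨b, hb, rfl⟩) | (h3 | h4)) | ⟨f, hf, rfl⟩) | ⟨f, hf, rfl⟩) |
      ⟨f, hf, rfl⟩) | ⟨f, hf, rfl⟩)
  · exact absurd (Finset.mem_image.mpr h1) hnot
  · constructor <;> intro f <;> simp [liftH]
  · subst h3; constructor <;> intro f <;> simp [flipH]
  · subst h4; constructor <;> intro f <;> simp [flipR]
  all_goals constructor <;> intro g <;> simp [chk1, chk2, chk3, chk4]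

lemma auxHu (MR MH : PModel F) (c : Act (LF F) → ℕ) :
    ∀ (π : List (Act (LF F))) (s : Finset (LF F)),
    ExecFrom (compiled MR MH c) s π →
    ∃ πH : List (Act F), ExecFrom MH (projHu s) πH ∧
      humanPart MH π = πH.map liftH ∧
      projHu (runSeq s π) = runSeq (projHu s) πH := by
  intro π
  induction π with
  | nil => exact fun s _ => ⟨[], trivial, rfl, rfl⟩
  | cons a π ih =>
    rintro s ⟨hmem, hexec, hrest⟩
    by_cases h : a ∈ MH.actions.image liftH
    · obtain ⟨b, hb, rfl⟩ := Finset.mem_image.mp h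
      obtain ⟨πH, h1, h2, h3⟩ := ih (stepAct s (liftH b)) hrest
      rw [projHu_step_liftH] at h1 h3
      refine ⟨b :: πH, ⟨hb, execAct_projHu hexec, h1⟩, ?_, h3⟩
      have hcond : ∃ a ∈ MH.actions, liftH a = liftH b := ⟨b, hb, rfl⟩
      simpa [humanPart, List.filter_cons, hcond] using h2
    · obtain ⟨ha, hd⟩ := classifyHu hmem h
      obtain ⟨πH, h1, h2, h3⟩ := ih (stepAct s a) hrest
      rw [projHu_step_other s a ha hd] at h1 h3
      refine ⟨πH, h1, ?_, h3⟩
      have hcond : ¬∃ a' ∈ MH.actions, liftH a' = a := by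
        simpa [Finset.mem_image] using h
      simpa [humanPart, List.filter_cons, hcond] using h2

lemma auxRo (MR MH : PModel F) (c : Act (LF F) → ℕ) :
    ∀ (π : List (Act (LF F))) (s : Finset (LF F)),
    ExecFrom (compiled MR MH c) s π →
    ∃ πR : List (Act F), ExecFrom MR (projRo s) πR ∧
      robotPart MR π = πR.map liftR ∧
      projRo (runSeq s π) = runSeq (projRo s) πR := by
  intro π
  induction π with
  | nil => exact fun s _ => ⟨[], trivial, rfl, rfl⟩
  | cons a π ih =>
    rintro s ⟨hmem, hexec, hrest⟩
    by_cases h : a ∈ MR.actions.image liftR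
    · obtain ⟨b, hb, rfl⟩ := Finset.mem_image.mp h
      obtain ⟨πR, h1, h2, h3⟩ := ih (stepAct s (liftR b)) hrest
      rw [projRo_step_liftR] at h1 h3
      refine ⟨b :: πR, ⟨hb, execAct_projRo hexec, h1⟩, ?_, h3⟩
      have hcond : ∃ a ∈ MR.actions, liftR a = liftR b := ⟨b, hb, rfl⟩
      simpa [robotPart, List.filter_cons, hcond] using h2
    · obtain ⟨ha, hd⟩ := classifyRo hmem h
      obtain ⟨πR, h1, h2, h3⟩ := ih (stepAct s a) hrest
      rw [projRo_step_other s a ha hd] at h1 h3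
      refine ⟨πR, h1, ?_, h3⟩
      have hcond : ¬∃ a' ∈ MR.actions, liftR a' = a := by
        simpa [Finset.mem_image] using h
      simpa [robotPart, List.filter_cons, hcond] using h2

lemma projHu_init (MR MH : PModel F) (c : Act (LF F) → ℕ) :
    projHu (compiled MR MH c).init = MH.init := by
  ext f
  simp [mem_projHu, compiled]

lemma projRo_init (MR MH : PModel F) (c : Act (LF F) → ℕ) :
    projRo (compiled MR MH c).init = MR.init := by
  ext f
  simp [mem_projRo, compiled]

end Aux

/-- for every valid plan `π^λ` of the compiled model `M^λ`, the subsequence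
`H(π^λ)` of human-copy actions is (when read back in the original fluents) a valid plan of
`M^H`, and the subsequence `R(π^λ)` of robot actions is a valid plan of `M^R`. -/
theorem compiled_plan_projects {F : Type} [DecidableEq F]
    (MR MH : PModel F) (c : Act (LF F) → ℕ)
    (hsh : MH.fluents = MR.fluents)
    (hwfR : WellFormed MR) (hwfH : WellFormed MH)
    (π : List (Act (LF F))) (hπ : IsPlan (compiled MR MH c) π) :
    (∃ πH : List (Act F), IsPlan MH πH ∧ humanPart MH π = πH.map liftH) ∧
    (∃ πR : List (Act F), IsPlan MR πR ∧ robotPart MR π = πR.map liftR) := by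
  obtain ⟨hexec, hgoal⟩ := hπ
  constructor
  · obtain ⟨πH, h1, h2, h3⟩ := auxHu MR MH c π _ hexec
    rw [projHu_init] at h1 h3
    refine ⟨πH, ⟨h1, ?_⟩, h2⟩
    intro f hf
    rw [← h3, mem_projHu]
    apply hgoal
    simp only [compiled, Finset.mem_union, Finset.mem_image]
    exact Or.inl (Or.inr ⟨f, hf, rfl⟩)
  · obtain ⟨πR, h1, h2, h3⟩ := auxRo MR MH c π _ hexec
    rw [projRo_init] at h1 h3
    refine ⟨πR, ⟨h1, ?_⟩, h2⟩
    intro f hf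
    rw [← h3, mem_projRo]
    apply hgoal
    simp only [compiled, Finset.mem_union, Finset.mem_image]
    exact Or.inl (Or.inl ⟨f, hf, rfl⟩)
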